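/- Suppose 𝓡ic(x,y,t) satisfies the evolution ∂ₜ 𝓡ic = -F² R^{ij} ∂²𝓡ic/∂y^i∂y^j where R^{ij}(t) is positive semidefinite, and suppose on the compact sphere bundle SM this equation takes the form ∂ₜ𝓡ic = -F² R^{αβ} ∇̇_α ∂_β 𝓡ic + H^λ ∂_λ 𝓡ic. If additionally ∂ₜ𝓡ic ≥ (elliptic terms) - 𝓡ic², then by comparison with φ(t) = α/(1+αt), the infimum m(t) = inf_{SM} 𝓡ic(·,t) satisfies m(t) ≥ α/(1+αt), where α = m(0) > 0. -/
import Mathlib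


/-- Lower bound for the Ricci scalar along the Finsler Ricci flow: on the
compact sphere bundle SM, if 𝓡ic satisfies a parabolic-type inequality
∂ₜ𝓡ic ≥ (elliptic terms) - 𝓡ic², where the elliptic operator
E(t) = -F²R^{αβ}∇̇_α∂_β + H^λ∂_λ is nonnegative at spatial minimum points
(positive semidefiniteness of R^{αβ}), then m(t) = inf_{SM} 𝓡ic(·,t)
satisfies m(t) ≥ α/(1+αt), where α = m(0) > 0. -/
theorem stmt_14 {SM : Type*} [TopologicalSpace SM] [CompactSpace SM] [Nonempty SM]
    (T : ℝ) (hT : 0 < T)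
    (Ric Ric' : SM → ℝ → ℝ) (E : ℝ → (SM → ℝ) → SM → ℝ)
    (hderiv : ∀ x, ∀ t ∈ Set.Icc 0 T, HasDerivAt (Ric x) (Ric' x t) t)
    (hcont : Continuous fun p : SM × ℝ => Ric p.1 p.2)
    (h'cont : Continuous fun p : SM × ℝ => Ric' p.1 p.2)
    (hE : ∀ t ∈ Set.Icc 0 T, ∀ v : SM → ℝ, ∀ x : SM,
      (∀ y, v x ≤ v y) → 0 ≤ E t v x)
    (hineq : ∀ x, ∀ t ∈ Set.Icc 0 T,
      Ric' x t ≥ E t (fun y => Ric y t) x - (Ric x t)^2)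
    (α : ℝ) (hα : α = ⨅ x : SM, Ric x 0) (hαpos : 0 < α) :
    ∀ t ∈ Set.Icc 0 T, (⨅ x : SM, Ric x t) ≥ α / (1 + α * t) := by
  -- the comparison function, extended continuously to all of ℝ
  set φ : ℝ → ℝ := fun t => α / (1 + α * max t 0) with hφdef
  have hden : ∀ t : ℝ, 0 < 1 + α * max t 0 := by
    intro t
    have h0 : (0:ℝ) ≤ max t 0 := le_max_right t 0
    nlinarith
  have hφcont : Continuous φ := by
    apply Continuous.div continuous_const
    · exact continuous_const.add (continuous_const.mul (continuous_id.max continuous_const))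
    · intro t; exact (hden t).ne'
  have hφpos : ∀ t, 0 < φ t := fun t => div_pos hαpos (hden t)
  have hφeq : ∀ t : ℝ, 0 ≤ t → φ t = α / (1 + α * t) := by
    intro t ht; simp [hφdef, max_eq_left ht]
  have hφderiv : ∀ t : ℝ, 0 < t → HasDerivAt φ (-(φ t)^2) t := by
    intro t ht
    have hne : (1 + α * t) ≠ 0 := by nlinarith
    have h1 : HasDerivAt (fun s : ℝ => 1 + α * s) α t := by
      simpa using ((hasDerivAt_id t).const_mul α).const_add 1
    have h2 : HasDerivAt (fun s : ℝ => α / (1 + α * s))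
        (α * (-α / (1 + α * t) ^ 2)) t := by
      simpa [div_eq_mul_inv] using (h1.inv hne).const_mul α
    have heqf : φ =ᶠ[nhds t] fun s : ℝ => α / (1 + α * s) := by
      filter_upwards [eventually_gt_nhds ht] with s hs
      simp [hφdef, max_eq_left hs.le]
    have h3 : HasDerivAt φ (α * (-α / (1 + α * t) ^ 2)) t :=
      h2.congr_of_eventuallyEq heqf
    have : α * (-α / (1 + α * t) ^ 2) = -(φ t)^2 := by
      rw [hφeq t ht.le]
      field_simp
    rwa [this] at h3
  -- continuity of t ↦ Ric x t, x ↦ Ric x t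
  have hcont_t : ∀ x, Continuous (fun t => Ric x t) := by
    intro x
    exact hcont.comp (continuous_const.prodMk continuous_id)
  have hcont_x : ∀ t, Continuous (fun x => Ric x t) := by
    intro t
    exact hcont.comp (continuous_id.prodMk continuous_const)
  -- α is a lower bound at time 0
  have hα0 : ∀ x, α ≤ Ric x 0 := by
    intro x
    obtain ⟨x₀, -, hx₀⟩ := isCompact_univ.exists_isMinOn Set.univ_nonempty
      (hcont_x 0).continuousOn
    have hbdd : BddBelow (Set.range fun x => Ric x 0) :=
      ⟨Ric x₀ 0, by rintro r ⟨y, rfl⟩; exact isMinOn_iff.mp hx₀ y (Set.mem_univ y)⟩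
    rw [hα]
    exact ciInf_le hbdd x
  -- key step: strict comparison with the perturbed barrier
  have key : ∀ ε : ℝ, 0 < ε → ε * (1 + T)^2 ≤ 1 →
      ∀ t ∈ Set.Icc 0 T, ∀ x, φ t - ε * (1 + t) < Ric x t := by
    intro ε hε hεT
    by_contra hcon
    push_neg at hcon
    obtain ⟨t₁, ht₁, x₁, hx₁⟩ := hcon
    set ψ : ℝ → ℝ := fun t => φ t - ε * (1 + t) with hψdef
    have hψcont : Continuous ψ :=
      hφcont.sub (continuous_const.mul (continuous_const.add continuous_id))
    set K : Set (SM × ℝ) :=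
      ((Set.univ : Set SM) ×ˢ Set.Icc 0 T) ∩ {p : SM × ℝ | Ric p.1 p.2 ≤ ψ p.2} with hKdef
    have hKcomp : IsCompact K :=
      (isCompact_univ.prod isCompact_Icc).inter_right
        (isClosed_le hcont (hψcont.comp continuous_snd))
    set S : Set ℝ := Prod.snd '' K with hSdef
    have hScomp : IsCompact S := hKcomp.image continuous_snd
    have hSne : S.Nonempty :=
      ⟨t₁, ⟨(x₁, t₁), ⟨⟨Set.mem_univ _, ht₁⟩, hx₁⟩, rfl⟩⟩
    set t₀ := sInf S with ht₀def
    have ht₀S : t₀ ∈ S := hScomp.sInf_mem hSne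
    obtain ⟨⟨x', s'⟩, ⟨⟨-, hs'Icc⟩, hs'le⟩, hs'eq⟩ := ht₀S
    simp only at hs'eq hs'le
    subst hs'eq
    -- t₀ > 0
    have ht₀Icc : t₀ ∈ Set.Icc 0 T := hs'Icc
    have ht₀pos : 0 < t₀ := by
      rcases lt_or_eq_of_le ht₀Icc.1 with h | h
      · exact h
      · exfalso
        have h1 : Ric x' t₀ ≤ ψ t₀ := hs'le
        rw [← h] at h1
        have h2 : ψ 0 = α - ε := by
          simp [hψdef, hφeq 0 le_rfl]
        have := hα0 x'
        rw [h2] at h1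
        linarith
    -- before t₀, comparison holds
    have hbefore : ∀ t, 0 ≤ t → t < t₀ → ∀ x, ψ t < Ric x t := by
      intro t h0t htt₀ x
      by_contra hle
      push_neg at hle
      have htS : t ∈ S :=
        ⟨(x, t), ⟨⟨Set.mem_univ _, ⟨h0t, htt₀.le.trans ht₀Icc.2⟩⟩, hle⟩, rfl⟩
      exact absurd (csInf_le hScomp.bddBelow htS) (not_le.mpr htt₀)
    -- spatial minimum point at time t₀
    obtain ⟨x₀, -, hx₀min⟩ := isCompact_univ.exists_isMinOn Set.univ_nonempty
      (hcont_x t₀).continuousOn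
    have hx₀min' : ∀ y, Ric x₀ t₀ ≤ Ric y t₀ :=
      fun y => isMinOn_iff.mp hx₀min y (Set.mem_univ y)
    -- h t = Ric x₀ t - ψ t
    set h : ℝ → ℝ := fun t => Ric x₀ t - ψ t with hhdef
    have hh_t₀_le : h t₀ ≤ 0 := by
      have := (hx₀min' x').trans hs'le
      simp [hhdef]
      linarith
    have hh_pos : ∀ t, 0 ≤ t → t < t₀ → 0 < h t := by
      intro t h0t htt₀
      have := hbefore t h0t htt₀ x₀
      simp [hhdef]; linarith
    -- h t₀ = 0 by continuity from the left
    have hhcont : Continuous h := (hcont_t x₀).sub hψcont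
    have hh_t₀_ge : 0 ≤ h t₀ := by
      have hne : (nhdsWithin t₀ (Set.Iio t₀)).NeBot := nhdsLT_neBot t₀
      have htd : Filter.Tendsto h (nhdsWithin t₀ (Set.Iio t₀)) (nhds (h t₀)) :=
        (hhcont.tendsto t₀).mono_left nhdsWithin_le_nhds
      refine ge_of_tendsto htd ?_
      have hev : ∀ᶠ t in nhdsWithin t₀ (Set.Iio t₀), 0 < t := by
        apply eventually_nhdsWithin_of_eventually_nhds
        exact eventually_gt_nhds ht₀pos
      filter_upwards [hev, self_mem_nhdsWithin] with t h0t hlt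
      exact (hh_pos t h0t.le hlt).le
    have hh_t₀ : h t₀ = 0 := le_antisymm hh_t₀_le hh_t₀_ge
    -- derivative of h at t₀
    have hψd : HasDerivAt ψ (-(φ t₀)^2 - ε) t₀ := by
      have h1 : HasDerivAt (fun t : ℝ => ε * (1 + t)) ε t₀ := by
        simpa using ((hasDerivAt_id t₀).const_add 1).const_mul ε
      exact (hφderiv t₀ ht₀pos).sub h1
    have hhd : HasDerivAt h (Ric' x₀ t₀ - (-(φ t₀)^2 - ε)) t₀ :=
      (hderiv x₀ t₀ ht₀Icc).sub hψd
    set d : ℝ := Ric' x₀ t₀ - (-(φ t₀)^2 - ε) with hddef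
    -- d ≤ 0 since h ≥ 0 on the left with h t₀ = 0
    have hd_nonpos : d ≤ 0 := by
      have hslope : Filter.Tendsto (slope h t₀) (nhdsWithin t₀ {t₀}ᶜ) (nhds d) :=
        hasDerivAt_iff_tendsto_slope.mp hhd
      have hmono : nhdsWithin t₀ (Set.Iio t₀) ≤ nhdsWithin t₀ {t₀}ᶜ :=
        nhdsWithin_mono t₀ (fun t ht => ne_of_lt ht)
      have hne : (nhdsWithin t₀ (Set.Iio t₀)).NeBot := nhdsLT_neBot t₀
      refine le_of_tendsto (hslope.mono_left hmono) ?_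
      have hev : ∀ᶠ t in nhdsWithin t₀ (Set.Iio t₀), 0 < t := by
        apply eventually_nhdsWithin_of_eventually_nhds
        exact eventually_gt_nhds ht₀pos
      filter_upwards [hev, self_mem_nhdsWithin] with t h0t hlt
      have hlt' : t < t₀ := hlt
      have hnum : 0 ≤ h t := (hh_pos t h0t.le hlt').le
      have heq : slope h t₀ t = (h t - h t₀) / (t - t₀) := by
        simp [slope_def_field]
      rw [heq, hh_t₀, sub_zero]
      exact div_nonpos_of_nonneg_of_nonpos hnum (by linarith)
    -- but d > 0: contradiction
    have hRic_eq : Ric x₀ t₀ = ψ t₀ := by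
      have : h t₀ = Ric x₀ t₀ - ψ t₀ := rfl
      linarith [hh_t₀, this ▸ hh_t₀]
    have hEnn : 0 ≤ E t₀ (fun y => Ric y t₀) x₀ :=
      hE t₀ ht₀Icc (fun y => Ric y t₀) x₀ hx₀min'
    have hR' : Ric' x₀ t₀ ≥ -(Ric x₀ t₀)^2 := by
      have := hineq x₀ t₀ ht₀Icc
      linarith
    have hd_pos : 0 < d := by
      have h1 : -(ψ t₀)^2 ≤ Ric' x₀ t₀ := by rwa [hRic_eq] at hR'
      have hψval : ψ t₀ = φ t₀ - ε * (1 + t₀) := rfl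
      have h1' : -(φ t₀ - ε * (1 + t₀))^2 ≤ Ric' x₀ t₀ := by rw [← hψval]; exact h1
      have hφt₀ : 0 < φ t₀ := hφpos t₀
      have ht₀T : t₀ ≤ T := ht₀Icc.2
      have ht₀0 : 0 ≤ t₀ := ht₀Icc.1
      have h1t₀ : (0:ℝ) < 1 + t₀ := by linarith
      have hC : ε * (1 + t₀)^2 ≤ 1 := by
        have hsq : (1 + t₀)^2 ≤ (1 + T)^2 := by nlinarith [mul_nonneg (sub_nonneg.mpr ht₀T) (by linarith : (0:ℝ) ≤ 2 + T + t₀)]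
        have := mul_le_mul_of_nonneg_left hsq hε.le
        linarith
      have hB : ε * (ε * (1 + t₀)^2) ≤ ε := by
        calc ε * (ε * (1 + t₀)^2) ≤ ε * 1 := mul_le_mul_of_nonneg_left hC hε.le
          _ = ε := mul_one ε
      have hD : 0 < ε * (φ t₀ * (1 + t₀)) := by positivity
      rw [hddef]
      nlinarith [hB, hD, h1']
    exact absurd hd_nonpos (not_le.mpr hd_pos)
  -- pass to the limit ε → 0
  have main : ∀ t ∈ Set.Icc 0 T, ∀ x, φ t ≤ Ric x t := by
    intro t ht x
    by_contra hlt
    push_neg at hlt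
    set δ := φ t - Ric x t with hδdef
    have hδpos : 0 < δ := by simp [hδdef]; linarith
    have h1T : (0:ℝ) < 1 + T := by linarith
    set ε := min (δ / (2 * (1 + T))) ((1 + T)^2)⁻¹ with hεdef
    have hεpos : 0 < ε := lt_min (div_pos hδpos (by linarith)) (inv_pos.mpr (by positivity))
    have hεT : ε * (1 + T)^2 ≤ 1 := by
      have : ε ≤ ((1 + T)^2)⁻¹ := min_le_right _ _
      calc ε * (1 + T)^2 ≤ ((1 + T)^2)⁻¹ * (1 + T)^2 := by
            apply mul_le_mul_of_nonneg_right this (by positivity)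
        _ = 1 := by field_simp
    have := key ε hεpos hεT t ht x
    have hεδ : ε * (1 + t) < δ := by
      have h1 : ε ≤ δ / (2 * (1 + T)) := min_le_left _ _
      have h2 : 1 + t ≤ 1 + T := by linarith [ht.2]
      calc ε * (1 + t) ≤ (δ / (2 * (1 + T))) * (1 + T) := by
            apply mul_le_mul h1 h2 (by linarith [ht.1]) (by positivity)
        _ = δ / 2 := by field_simp
        _ < δ := by linarith
    simp only [hδdef] at hεδ
    linarith
  -- conclude
  intro t ht
  rw [← hφeq t ht.1]
  exact le_ciInf (fun x => main t ht x)
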